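/- Let n ≥ 1 be an integer and let ρ : ℤ → ℝ satisfy Σ_{l∈ℤ} |ρ(l)|ⁿ < ∞. Suppose there exists a family {e_l}_{l≥0} ⊂ L²(ℝ₊) with ∫₀^∞ e_l(x) e_m(x) dx = ρ(l−m) for all l,m ≥ 0. Then Σ_{l∈ℤ} ρ(l)ⁿ ≥ 0. -/

import Mathlib

open MeasureTheory

noncomputable section

/-- Lebesgue measure restricted to `ℝ₊ = [0,∞)`. -/
def mR : Measure ℝ := volume.restrict (Set.Ici (0 : ℝ))

/-- Lebesgue measure on `ℝ₊ⁿ`. -/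
def μn (n : ℕ) : Measure (Fin n → ℝ) := Measure.pi fun _ => mR

/-- Number of inversions of a map `σ : Fin p → Fin m`:
`inv(σ) = Card {i < j : σ i > σ j}`. -/
def invCount {p m : ℕ} (σ : Fin p → Fin m) : ℕ :=
  (Finset.univ.filter fun ij : Fin p × Fin p => ij.1 < ij.2 ∧ σ ij.2 < σ ij.1).card

/-- The `q`-inner product
`⟨f,g⟩_q = Σ_{σ ∈ S_n} q^{inv σ} ∫ f(t_{σ(1)},…,t_{σ(n)}) g(t₁,…,t_n) dt`. -/
def qInner (n : ℕ) (q : ℝ) (f g : (Fin n → ℝ) → ℝ) : ℝ :=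
  ∑ σ : Equiv.Perm (Fin n),
    q ^ invCount (fun i => σ i) * ∫ t, f (fun i => t (σ i)) * g t ∂ μn n

/-- `f*`, the mirror of `f` : `f*(t₁,…,tₙ) = f(tₙ,…,t₁)`. -/
def mirror {n : ℕ} (f : (Fin n → ℝ) → ℝ) : (Fin n → ℝ) → ℝ := fun t => f fun i => t i.rev

/-- The pairing integral `∫_{P₂(σ)} F ⊗ H` associated with the pairing
`P₂(σ) = {{N+1-i, N+σ(i)} : 1 ≤ i ≤ N}` of `{1,…,2N}`, namely
`∫ F(s₁,…,s_N) H(s_{N+1-σ⁻¹(1)},…,s_{N+1-σ⁻¹(N)}) ds`. -/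
def P2Integral (N : ℕ) (σ : Equiv.Perm (Fin N)) (F H : (Fin N → ℝ) → ℝ) : ℝ :=
  ∫ s, F s * H (fun i => s (σ.symm i).rev) ∂ μn N

/-- `f` is symmetric: for every permutation `σ`, `f(t_{σ(1)},…,t_{σ(n)}) = f(t₁,…,tₙ)`
for almost every `t`. -/
def SymmFn {n : ℕ} (f : (Fin n → ℝ) → ℝ) : Prop :=
  ∀ σ : Equiv.Perm (Fin n), ∀ᵐ t ∂ μn n, f (fun i => t (σ i)) = f t

/-- Safe coordinate access: `gv t k = t k` when `k < m`, and `0` otherwise. -/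
def gv {m : ℕ} (t : Fin m → ℝ) (k : ℕ) : ℝ := if h : k < m then t ⟨k, h⟩ else 0

/-- The `p`-th contraction `f ⌢_p g`:
`(f ⌢_p g)(t₁,…,t_{n+m-2p}) = ∫ f(t₁,…,t_{n-p},s_p,…,s₁) g(s₁,…,s_p,t_{n-p+1},…,t_{n+m-2p}) ds`. -/
def contr (n m p : ℕ) (f : (Fin n → ℝ) → ℝ) (g : (Fin m → ℝ) → ℝ) :
    (Fin (n + m - 2 * p) → ℝ) → ℝ :=
  fun t => ∫ s : Fin p → ℝ,
      f (fun i => if (i : ℕ) < n - p then gv t i else gv s (n - 1 - (i : ℕ))) *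
      g (fun j => if (j : ℕ) < p then gv s j else gv t (n - p + ((j : ℕ) - p))) ∂ μn p

/-- `α(σ)` for a (strictly decreasing, 0-indexed) `σ : Fin p → Fin n`;
in 1-indexed terms `α(σ) = Σᵢ (n+1-σ(i)) - p(p+1)/2`. -/
def alphaA (n p : ℕ) (σ : Fin p → Fin n) : ℕ := (∑ i, (n - (σ i : ℕ))) - p * (p + 1) / 2

/-- `β(σ)` for an (injective, 0-indexed) `σ : Fin p → Fin n`;
in 1-indexed terms `β(σ) = Σᵢ σ(i) - p(p+1)/2 + inv(σ)`. -/
def betaB (n p : ℕ) (σ : Fin p → Fin n) : ℕ :=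
  ((∑ i, (σ i : ℕ)) - p * (p - 1) / 2) + invCount σ

/-- `f_q^{(p)}`, as a function of `(t₁,…,t_{n-p},s_p,…,s₁)`:
`Σ_{σ : {1,…,p} → {1,…,n} strictly decreasing} q^{α(σ)} f(x₁,…,xₙ)` where `x_{σ(i)} = s_i`
and the remaining coordinates, read increasingly, are `t₁,…,t_{n-p}`. -/
def qexpDec (n p : ℕ) (q : ℝ) (f : (Fin n → ℝ) → ℝ) : (Fin n → ℝ) → ℝ :=
  fun u => ∑ σ ∈ Finset.univ.filter (fun σ : Fin p → Fin n => ∀ i j : Fin p, i < j → σ j < σ i),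
    q ^ alphaA n p σ * f (fun j =>
      if ∃ i, σ i = j then
        ∑ i ∈ Finset.univ.filter (fun i => σ i = j), gv u (n - 1 - (i : ℕ))
      else gv u ((Finset.univ.filter fun j' : Fin n => j' < j ∧ ∀ i, σ i ≠ j').card))

/-- `f_q^{[p]}`, as a function of `(s₁,…,s_p,t₁,…,t_{n-p})`:
`Σ_{σ : {1,…,p} → {1,…,n} injective} q^{β(σ)} f(x₁,…,xₙ)` where `x_{σ(i)} = s_i`
and the remaining coordinates, read increasingly, are `t₁,…,t_{n-p}`. -/
def qexpInj (n p : ℕ) (q : ℝ) (f : (Fin n → ℝ) → ℝ) : (Fin n → ℝ) → ℝ :=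
  fun u => ∑ σ ∈ Finset.univ.filter (fun σ : Fin p → Fin n => Function.Injective σ),
    q ^ betaB n p σ * f (fun j =>
      if ∃ i, σ i = j then
        ∑ i ∈ Finset.univ.filter (fun i => σ i = j), gv u (i : ℕ)
      else gv u (p + (Finset.univ.filter fun j' : Fin n => j' < j ∧ ∀ i, σ i ≠ j').card))

/-- The `q`-contraction `f ⊗_q^p g := f_q^{(p)} ⌢_p g_q^{[p]}`. -/
def qcontr (n m p : ℕ) (q : ℝ) (f : (Fin n → ℝ) → ℝ) (g : (Fin m → ℝ) → ℝ) :
    (Fin (n + m - 2 * p) → ℝ) → ℝ :=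
  contr n m p (qexpDec n p q f) (qexpInj m p q g)

/-- Two (2-element) sets form a crossing: `{x₁,y₁}, {x₂,y₂}` with `x₁ < x₂ < y₁ < y₂`. -/
def Crossing (p₁ p₂ : Finset ℕ) : Prop :=
  ∃ x₁ ∈ p₁, ∃ y₁ ∈ p₁, ∃ x₂ ∈ p₂, ∃ y₂ ∈ p₂, x₁ < x₂ ∧ x₂ < y₁ ∧ y₁ < y₂

/-- The number of crossings `Cr(π)` of a pairing `π` (each crossing counted once:
the pair containing the smallest point is listed first). -/
def crNum (π : Finset (Finset ℕ)) : ℕ := by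
  classical exact ((π ×ˢ π).filter fun pp => Crossing pp.1 pp.2).card

/-- `π` is a pairing of `{0,…,N-1}`: a partition of it into 2-element sets. -/
def IsPairingOn (N : ℕ) (π : Finset (Finset ℕ)) : Prop :=
  (∀ pr ∈ π, pr.card = 2 ∧ pr ⊆ Finset.range N) ∧ ∀ x < N, ∃! pr, pr ∈ π ∧ x ∈ pr

/-- `off n i = n₁ + … + nᵢ`, the offset of the `(i+1)`-th block. -/
def off (n : ℕ → ℕ) (i : ℕ) : ℕ := ∑ j ∈ Finset.range i, n j

/-- `π ∈ C₂(n₁ ⊗ … ⊗ n_r)`: `π` is a pairing of the ground set partitioned into the `r`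
consecutive blocks of sizes `n 0, …, n (r-1)`, and every pair of `π` meets two distinct
blocks (no pair is contained in a single block). -/
def Respects (r : ℕ) (n : ℕ → ℕ) (π : Finset (Finset ℕ)) : Prop :=
  IsPairingOn (off n r) π ∧
    ∀ pr ∈ π, ¬ ∃ i < r, ∀ x ∈ pr, off n i ≤ x ∧ x < off n (i + 1)

/-- The (finite) set `C₂(n₁ ⊗ … ⊗ n_r)` of all respecting pairings. -/
def respPairings (r : ℕ) (n : ℕ → ℕ) : Finset (Finset (Finset ℕ)) := by
  classical exact ((Finset.range (off n r)).powerset.powerset).filter fun π => Respects r n π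

/-- The pairing integral `∫_π F`: one integration variable per pair of `π`, the two
coordinates of each pair being set equal to that variable, integrated over `ℝ₊^{N/2}`. -/
def pairingIntegral (π : Finset (Finset ℕ)) (F : (ℕ → ℝ) → ℝ) : ℝ :=
  ∫ u : {pr // pr ∈ π} → ℝ,
    F (fun x => ∑ pr ∈ Finset.univ.filter (fun pr : {pr // pr ∈ π} => x ∈ pr.1), u pr)
    ∂ Measure.pi fun _ => mR

/-- The product `f₁(t₁,…,t_{n₁}) f₂(t_{n₁+1},…,t_{n₁+n₂}) ⋯ f_r(…,t_n)` as a function of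
`t : ℕ → ℝ` (blocks of sizes `n 0, …, n (r-1)`). -/
def prodBlocks (r : ℕ) (n : ℕ → ℕ) (f : ∀ i, (Fin (n i) → ℝ) → ℝ) : (ℕ → ℝ) → ℝ :=
  fun t => ∏ i ∈ Finset.range r, f i (fun j => t (off n i + (j : ℕ)))

/-- `P₂(σ) = {{n+1-i, n+σ(i)} : 1 ≤ i ≤ n}` as a pairing of `{0,…,2n-1}` (0-indexed). -/
def P2set (n : ℕ) (σ : Equiv.Perm (Fin n)) : Finset (Finset ℕ) :=
  Finset.univ.image fun i : Fin n => ({n - 1 - (i : ℕ), n + ((σ i : Fin n) : ℕ)} : Finset ℕ)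

/-- The map `φ` in the construction of `F(σ₁,σ₂,π')`: the unpaired points of the first two
blocks are mapped increasingly onto `{0,…,n₀+n₁-2p-1}` and every later point `x` is mapped
to `x - 2p`. -/
def phiF (n₀ n₁ p : ℕ) (σ₁ : Fin p → Fin n₀) (σ₂ : Fin p → Fin n₁) (x : ℕ) : ℕ :=
  if x < n₀ + n₁ then
    ((Finset.range x).filter fun y =>
      (∀ i, ((σ₁ i : ℕ)) ≠ y) ∧ (∀ i, n₀ + (σ₂ i : ℕ) ≠ y)).card
  else x - 2 * p

/-- The pairing `F(σ₁,σ₂,π')` of the ground set `{0,…,N-1}`: it contains the `p` pairs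
`{σ₁(i), n₀+σ₂(i)}`, and its remaining pairs are exactly the `φ`-preimages of the pairs
of `π'`. -/
def Fpair (N n₀ n₁ p : ℕ) (σ₁ : Fin p → Fin n₀) (σ₂ : Fin p → Fin n₁)
    (π' : Finset (Finset ℕ)) : Finset (Finset ℕ) :=
  (Finset.univ.image fun i : Fin p => ({(σ₁ i : ℕ), n₀ + (σ₂ i : ℕ)} : Finset ℕ)) ∪
  π'.image fun pr => (Finset.range N).filter fun x =>
    (x < n₀ + n₁ → (∀ i, (σ₁ i : ℕ) ≠ x) ∧ (∀ i, n₀ + (σ₂ i : ℕ) ≠ x)) ∧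
    phiF n₀ n₁ p σ₁ σ₂ x ∈ pr

/-- Block sizes `(n₁+n₂-2p, n₃, …, n_r)` after contracting the first two blocks. -/
def contractedSizes (n : ℕ → ℕ) (p : ℕ) : ℕ → ℕ
  | 0 => n 0 + n 1 - 2 * p
  | k + 1 => n (k + 2)

/-- Kernels `(f₁ ⊗_q^p f₂, f₃, …, f_r)` after contracting the first two kernels. -/
def contractedKernels (n : ℕ → ℕ) (p : ℕ) (q : ℝ) (f : ∀ i, (Fin (n i) → ℝ) → ℝ) :
    ∀ j, (Fin (contractedSizes n p j) → ℝ) → ℝ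
  | 0 => qcontr (n 0) (n 1) p q (f 0) (f 1)
  | k + 1 => f (k + 2)

end
/-
For `t ∈ ℝ₊ⁿ` put `g_N(t) = ∑_{j<N} ∏ᵢ e_j(tᵢ)`. By Fubini `∫ g_N² = ∑_{j,k<N} ρ(j-k)ⁿ`, so every
Toeplitz block sum of `ρⁿ` is nonnegative. Dividing by `N` gives the Fejér means
`∑_l (1 - |l|/N)₊ ρ(l)ⁿ ≥ 0`, which converge to `∑_l ρ(l)ⁿ` by dominated convergence.
-/

open MeasureTheory Filter Topology Finset

section Gram

variable {α ι : Type*} [MeasurableSpace α] {μ : Measure α}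

theorem sum_sum_integral_mul_nonneg (f : ι → α → ℝ)
    (hf : ∀ j k, Integrable (fun x => f j x * f k x) μ) (s : Finset ι) :
    0 ≤ ∑ j ∈ s, ∑ k ∈ s, ∫ x, f j x * f k x ∂μ := by
  have hsq : ∀ x, (∑ j ∈ s, f j x) ^ 2 = ∑ j ∈ s, ∑ k ∈ s, f j x * f k x := fun x => by
    rw [sq, sum_mul_sum]
  calc 0 ≤ ∫ x, (∑ j ∈ s, f j x) ^ 2 ∂μ := integral_nonneg fun x => sq_nonneg _
    _ = ∑ j ∈ s, ∑ k ∈ s, ∫ x, f j x * f k x ∂μ := by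
      simp_rw [hsq]
      rw [integral_finsetSum _ fun j _ => integrable_finsetSum _ fun k _ => hf j k]
      exact sum_congr rfl fun j _ => integral_finsetSum _ fun k _ => hf j k

theorem sum_sum_integral_mul_pow_nonneg [SigmaFinite μ] (f : ι → α → ℝ)
    (hf : ∀ j, MemLp (f j) 2 μ) (n : ℕ) (s : Finset ι) :
    0 ≤ ∑ j ∈ s, ∑ k ∈ s, (∫ x, f j x * f k x ∂μ) ^ n := by
  have hmul : ∀ j k, Integrable (fun x => f j x * f k x) μ := fun j k =>
    (hf j).integrable_mul (hf k)
  have hprod : ∀ j k, Integrable (fun t : Fin n → α => (∏ i, f j (t i)) * ∏ i, f k (t i))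
      (Measure.pi fun _ => μ) := fun j k => by
    simpa only [prod_mul_distrib] using Integrable.fintype_prod (ι := Fin n) fun _ => hmul j k
  have hpow : ∀ j k, ∫ t : Fin n → α, (∏ i, f j (t i)) * ∏ i, f k (t i) ∂(Measure.pi fun _ => μ)
      = (∫ x, f j x * f k x ∂μ) ^ n := fun j k => by
    simp only [← prod_mul_distrib]
    rw [integral_fintype_prod_eq_pow (fun x => f j x * f k x), Fintype.card_fin]
  simpa only [hpow] using
    sum_sum_integral_mul_nonneg (fun j (t : Fin n → α) => ∏ i, f j (t i)) hprod s

end Gram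

section Fejer

theorem card_filter_sub_eq (N : ℕ) (l : ℤ) :
    #{p ∈ range N ×ˢ range N | (p.1 : ℤ) - p.2 = l} = N - l.natAbs := by
  rw [← card_range (N - l.natAbs)]
  apply card_nbij' (fun p => min p.1 p.2) (fun m => (m + l.toNat, m + (-l).toNat))
  · intro p hp
    simp only [coe_filter, mem_product, mem_range, Set.mem_ofPred_eq, coe_range,
      Set.mem_Iio] at hp ⊢
    omega
  · intro m hm
    simp only [coe_filter, mem_product, mem_range, Set.mem_ofPred_eq, coe_range,
      Set.mem_Iio] at hm ⊢
    omega
  · intro p hp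
    simp only [coe_filter, mem_product, mem_range, Set.mem_ofPred_eq] at hp
    ext <;> simp <;> omega
  · intro m _
    simp only [min_def]
    split_ifs <;> omega

theorem sum_range_sum_range_sub_eq {M : Type*} [AddCommMonoid M] (r : ℤ → M) (N : ℕ) :
    ∑ j ∈ range N, ∑ k ∈ range N, r (j - k)
      = ∑ l ∈ Icc (-(N : ℤ)) N, (N - l.natAbs) • r l := by
  rw [← sum_product', ← sum_fiberwise_of_maps_to (t := Icc (-(N : ℤ)) N)
    (g := fun p : ℕ × ℕ => (p.1 : ℤ) - p.2) fun p hp => by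
      simp only [mem_product, mem_range] at hp
      simp only [mem_Icc]
      omega]
  refine sum_congr rfl fun l _ => ?_
  rw [sum_congr rfl fun p hp => congrArg r (mem_filter.1 hp).2, sum_const, card_filter_sub_eq]

theorem tendsto_inv_mul_sum_range_sum_range_sub {r : ℤ → ℝ} (hr : Summable fun l => |r l|) :
    Tendsto (fun N : ℕ => (N : ℝ)⁻¹ * ∑ j ∈ range N, ∑ k ∈ range N, r (j - k)) atTop
      (𝓝 (∑' l, r l)) := by
  let w : ℕ → ℤ → ℝ := fun N l => ((N - l.natAbs : ℕ) : ℝ) / N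
  have hmean : ∀ N : ℕ, (N : ℝ)⁻¹ * ∑ j ∈ range N, ∑ k ∈ range N, r (j - k)
      = ∑' l, w N l * r l := fun N => by
    rw [sum_range_sum_range_sub_eq, mul_sum, tsum_eq_sum (s := Icc (-(N : ℤ)) N)]
    · exact sum_congr rfl fun l _ => by rw [nsmul_eq_mul]; ring
    · intro l hl
      have : N - l.natAbs = 0 := by rw [mem_Icc] at hl; omega
      simp [w, this]
  have hw_tendsto : ∀ l, Tendsto (fun N => w N l) atTop (𝓝 1) := fun l => by
    have h : Tendsto (fun N : ℕ => 1 - (l.natAbs : ℝ) / N) atTop (𝓝 1) := by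
      simpa using tendsto_const_nhds.sub (tendsto_const_div_atTop_nhds_zero_nat (l.natAbs : ℝ))
    refine h.congr' ?_
    filter_upwards [eventually_gt_atTop l.natAbs] with N hN
    have hN0 : (N : ℝ) ≠ 0 := Nat.cast_ne_zero.2 (by omega)
    simp only [w]
    rw [Nat.cast_sub hN.le, sub_div, div_self hN0]
  have hw_abs_le : ∀ N l, |w N l| ≤ 1 := fun N l => by
    rw [abs_of_nonneg (by positivity)]
    exact div_le_one_of_le₀ (Nat.cast_le.2 (Nat.sub_le _ _)) N.cast_nonneg
  simp_rw [hmean]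
  refine tendsto_tsum_of_dominated_convergence hr
    (fun l => by simpa using (hw_tendsto l).mul_const (r l)) (Eventually.of_forall fun N l => ?_)
  rw [Real.norm_eq_abs, abs_mul]
  exact mul_le_of_le_one_left (abs_nonneg _) (hw_abs_le N l)

end Fejer

instance : SigmaFinite mR := inferInstanceAs (SigmaFinite (volume.restrict _))

theorem stmt19_general (n : ℕ) (ρ : ℤ → ℝ)
    (hsum : Summable fun l : ℤ => |ρ l| ^ n)
    (e : ℕ → ℝ → ℝ) (he : ∀ l, MemLp (e l) 2 mR)
    (hcov : ∀ l m : ℕ, ∫ x, e l x * e m x ∂ mR = ρ ((l : ℤ) - (m : ℤ))) :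
    0 ≤ ∑' l : ℤ, ρ l ^ n := by
  have hblock : ∀ N : ℕ, 0 ≤ ∑ j ∈ range N, ∑ k ∈ range N, ρ (j - k) ^ n := fun N => by
    simpa only [hcov] using sum_sum_integral_mul_pow_nonneg e he n (range N)
  have hlim := tendsto_inv_mul_sum_range_sum_range_sub (r := fun l => ρ l ^ n)
    (by simpa only [abs_pow] using hsum)
  exact ge_of_tendsto hlim (Eventually.of_forall fun N => mul_nonneg (by positivity) (hblock N))

/-- If `Σ_{l∈ℤ} |ρ(l)|ⁿ < ∞` and there is a family `{e_l} ⊂ L²(ℝ₊)` with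
`∫ e_l e_m = ρ(l-m)`, then `Σ_{l∈ℤ} ρ(l)ⁿ ≥ 0`. -/
theorem stmt19 (n : ℕ) (hn : 1 ≤ n) (ρ : ℤ → ℝ)
    (hsum : Summable fun l : ℤ => |ρ l| ^ n)
    (e : ℕ → ℝ → ℝ) (he : ∀ l, MemLp (e l) 2 mR)
    (hcov : ∀ l m : ℕ, ∫ x, e l x * e m x ∂ mR = ρ ((l : ℤ) - (m : ℤ))) :
    0 ≤ ∑' l : ℤ, ρ l ^ n :=
  stmt19_general n ρ hsum e he hcov
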